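/- arXiv:2312.05845 — 2 statements merged into one kernel-verified Lean document; each statement's English description precedes it below -/
import Mathlib

section
/- Let ∗ be a commutative, associative, order-preserving binary operation on ℚ ∩ [0,1] with unit t that is residuated. Define a∘b = sup{x∗y : x, y ∈ ℚ∩[0,1], x < a, y < b} for a, b ∈ [0,1] (with the convention making ∘ agree with ∗ on arguments where the sups are attained appropriately). Then ∘ is commutative, associative, and left-continuous (equivalently residuated) on [0,1], and extends the left-continuous co-restriction of ∗. -/
open Set

theorem densification_extension
    (star : ℝ → ℝ → ℝ) (t : ℝ)
    (Q : Set ℝ)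
    (hQ : Q = {x | x ∈ Set.Icc (0:ℝ) 1 ∧ ∃ q : ℚ, (q : ℝ) = x})
    (hclosed : ∀ x ∈ Q, ∀ y ∈ Q, star x y ∈ Q)
    (ht : t ∈ Q)
    (hunit : ∀ x ∈ Q, star t x = x)
    (hcomm : ∀ x ∈ Q, ∀ y ∈ Q, star x y = star y x)
    (hassoc : ∀ x ∈ Q, ∀ y ∈ Q, ∀ z ∈ Q, star (star x y) z = star x (star y z))
    (hmono : ∀ x ∈ Q, ∀ y ∈ Q, ∀ y' ∈ Q, y ≤ y' → star x y ≤ star x y')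
    (hres : ∀ x ∈ Q, ∀ z ∈ Q, ∃ y ∈ Q, star x y ≤ z ∧ ∀ y' ∈ Q, star x y' ≤ z → y' ≤ y)
    (circ : ℝ → ℝ → ℝ)
    (hcirc : ∀ a b : ℝ, circ a b =
      sSup {z | ∃ x ∈ Q, ∃ y ∈ Q, x < a ∧ y < b ∧ z = star x y}) :
    (∀ a ∈ Set.Icc (0:ℝ) 1, ∀ b ∈ Set.Icc (0:ℝ) 1, circ a b = circ b a)
    ∧ (∀ a ∈ Set.Icc (0:ℝ) 1, ∀ b ∈ Set.Icc (0:ℝ) 1, ∀ c ∈ Set.Icc (0:ℝ) 1,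
        circ (circ a b) c = circ a (circ b c))
    ∧ (∀ a ∈ Set.Icc (0:ℝ) 1, ∀ z ∈ Set.Icc (0:ℝ) 1,
        ∃ y ∈ Set.Icc (0:ℝ) 1, circ a y ≤ z ∧
          ∀ y' ∈ Set.Icc (0:ℝ) 1, circ a y' ≤ z → y' ≤ y)
    ∧ (∀ a ∈ Q, ∀ b ∈ Q,
        star a b = sSup {z | ∃ x ∈ Q, ∃ y ∈ Q, x < a ∧ y < b ∧ z = star x y} →
        circ a b = star a b) := by
  -- basic facts about Q
  have hQicc : ∀ x ∈ Q, 0 ≤ x ∧ x ≤ 1 := by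
    intro x hx; rw [hQ] at hx; exact ⟨hx.1.1, hx.1.2⟩
  have hQmem : ∀ q : ℚ, 0 ≤ (q:ℝ) → (q:ℝ) ≤ 1 → (q:ℝ) ∈ Q := by
    intro q h1 h2; rw [hQ]; exact ⟨⟨h1, h2⟩, q, rfl⟩
  have hQ0 : (0:ℝ) ∈ Q := by simpa using hQmem 0 (by norm_num) (by norm_num)
  have hdense : ∀ r p : ℝ, 0 ≤ r → p ≤ 1 → r < p → ∃ u ∈ Q, r < u ∧ u < p := by
    intro r p hr hp hrp
    obtain ⟨q, hq1, hq2⟩ := exists_rat_btwn hrp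
    exact ⟨q, hQmem q ((hr.trans_lt hq1).le) ((hq2.trans_le hp).le), hq1, hq2⟩
  -- the sets defining circ
  set S : ℝ → ℝ → Set ℝ :=
    fun a b => {z | ∃ x ∈ Q, ∃ y ∈ Q, x < a ∧ y < b ∧ z = star x y} with hSdef
  have hcirc' : ∀ a b : ℝ, circ a b = sSup (S a b) := hcirc
  have hmemS : ∀ {a b x y : ℝ}, x ∈ Q → y ∈ Q → x < a → y < b → star x y ∈ S a b :=
    fun hx hy hxa hyb => ⟨_, hx, _, hy, hxa, hyb, rfl⟩
  have hSsub : ∀ a b : ℝ, S a b ⊆ Icc (0:ℝ) 1 := by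
    rintro a b z ⟨x, hx, y, hy, -, -, rfl⟩
    exact ⟨(hQicc _ (hclosed x hx y hy)).1, (hQicc _ (hclosed x hx y hy)).2⟩
  have hbdd : ∀ a b : ℝ, BddAbove (S a b) := fun a b => ⟨1, fun z hz => (hSsub a b hz).2⟩
  have hleC : ∀ {a b z : ℝ}, z ∈ S a b → z ≤ circ a b := by
    intro a b z hz; rw [hcirc']; exact le_csSup (hbdd a b) hz
  have hCle : ∀ {a b M : ℝ}, 0 ≤ M → (∀ z ∈ S a b, z ≤ M) → circ a b ≤ M := by
    intro a b M hM h; rw [hcirc']; exact Real.sSup_le h hM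
  have hCnonneg : ∀ a b : ℝ, 0 ≤ circ a b := by
    intro a b; rw [hcirc']; exact Real.sSup_nonneg (fun z hz => (hSsub a b hz).1)
  have hexistslt : ∀ {a b u : ℝ}, 0 ≤ u → u < circ a b → ∃ z ∈ S a b, u < z := by
    intro a b u hu h
    by_contra hc; push_neg at hc
    exact absurd (hCle hu hc) (not_le.mpr h)
  -- star x 0 = 0
  have star0 : ∀ w ∈ Q, star w 0 = 0 := by
    intro w hw
    obtain ⟨y, hy, hle0, -⟩ := hres w hw 0 hQ0
    have h1 : star w 0 ≤ star w y := hmono w hw 0 hQ0 y hy (hQicc y hy).1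
    have h2 := (hQicc _ (hclosed w hw 0 hQ0)).1
    linarith
  -- left continuity of star on Q (from residuation + density)
  have leftcont : ∀ w ∈ Q, ∀ p ∈ Q, ∀ r : ℝ, 0 ≤ r →
      (∀ u ∈ Q, u < p → star w u ≤ r) → star w p ≤ r := by
    intro w hw p hp r hr hub
    rcases eq_or_lt_of_le (hQicc p hp).1 with h0 | h0
    · rw [← h0, star0 w hw]; exact hr
    by_contra hcon
    push_neg at hcon
    have hwp1 : star w p ≤ 1 := (hQicc _ (hclosed w hw p hp)).2
    obtain ⟨z, hz, hrz, hzp⟩ := hdense r (star w p) hr hwp1 hcon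
    obtain ⟨r₀, hr₀Q, hr₀le, hr₀max⟩ := hres w hw z hz
    have hpr₀ : p ≤ r₀ := by
      by_contra hc; push_neg at hc
      obtain ⟨u, hu, hru, hup⟩ := hdense r₀ p (hQicc _ hr₀Q).1 (hQicc p hp).2 hc
      have := hr₀max u hu (((hub u hu hup).trans_lt hrz).le)
      linarith
    have := hmono w hw p hp r₀ hr₀Q hpr₀
    linarith
  -- key inequalities
  have key1 : ∀ a b c : ℝ, ∀ x ∈ Q, ∀ y ∈ Q, ∀ w ∈ Q, x < a → y < b → w < c →
      star (star x y) w ≤ circ (circ a b) c := by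
    intro a b c x hx y hy w hw hxa hyb hwc
    have hpQ : star x y ∈ Q := hclosed x hx y hy
    have hple : star x y ≤ circ a b := hleC (hmemS hx hy hxa hyb)
    rcases lt_or_eq_of_le hple with h | h
    · exact hleC (hmemS hpQ hw h hwc)
    · rw [hcomm _ hpQ _ hw]
      refine leftcont w hw _ hpQ _ (hCnonneg _ _) ?_
      intro u hu hup
      rw [hcomm _ hw _ hu]
      exact hleC (hmemS hu hw (h ▸ hup) hwc)
  have key2 : ∀ a b c : ℝ, ∀ x ∈ Q, ∀ y ∈ Q, ∀ w ∈ Q, x < a → y < b → w < c →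
      star x (star y w) ≤ circ a (circ b c) := by
    intro a b c x hx y hy w hw hxa hyb hwc
    have hqQ : star y w ∈ Q := hclosed y hy w hw
    have hqle : star y w ≤ circ b c := hleC (hmemS hy hw hyb hwc)
    rcases lt_or_eq_of_le hqle with h | h
    · exact hleC (hmemS hx hqQ hxa h)
    · refine leftcont x hx _ hqQ _ (hCnonneg _ _) ?_
      intro u hu hup
      exact hleC (hmemS hx hu hxa (h ▸ hup))
  have le1 : ∀ a b c : ℝ, circ (circ a b) c ≤ circ a (circ b c) := by
    intro a b c
    refine hCle (hCnonneg _ _) ?_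
    rintro z ⟨u, hu, w, hw, hucab, hwc, rfl⟩
    obtain ⟨v, hvS, huv⟩ := hexistslt (hQicc u hu).1 hucab
    obtain ⟨x, hx, y, hy, hxa, hyb, rfl⟩ := hvS
    have hxyQ := hclosed x hx y hy
    calc star u w ≤ star (star x y) w := by
          rw [hcomm u hu w hw, hcomm _ hxyQ w hw]
          exact hmono w hw u hu _ hxyQ huv.le
      _ = star x (star y w) := hassoc x hx y hy w hw
      _ ≤ circ a (circ b c) := key2 a b c x hx y hy w hw hxa hyb hwc
  have le2 : ∀ a b c : ℝ, circ a (circ b c) ≤ circ (circ a b) c := by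
    intro a b c
    refine hCle (hCnonneg _ _) ?_
    rintro z ⟨x, hx, v, hv, hxa, hvcbc, rfl⟩
    obtain ⟨q, hqS, hvq⟩ := hexistslt (hQicc v hv).1 hvcbc
    obtain ⟨y, hy, w, hw, hyb, hwc, rfl⟩ := hqS
    calc star x v ≤ star x (star y w) := hmono x hx v hv _ (hclosed y hy w hw) hvq.le
      _ = star (star x y) w := (hassoc x hx y hy w hw).symm
      _ ≤ circ (circ a b) c := key1 a b c x hx y hy w hw hxa hyb hwc
  refine ⟨?_, ?_, ?_, ?_⟩
  · -- commutativity
    intro a _ b _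
    rw [hcirc, hcirc]
    congr 1
    ext z
    constructor
    · rintro ⟨x, hx, y, hy, h1, h2, rfl⟩
      exact ⟨y, hy, x, hx, h2, h1, hcomm x hx y hy⟩
    · rintro ⟨x, hx, y, hy, h1, h2, rfl⟩
      exact ⟨y, hy, x, hx, h2, h1, hcomm x hx y hy⟩
  · -- associativity
    intro a _ b _ c _
    exact le_antisymm (le1 a b c) (le2 a b c)
  · -- residuation
    intro a _ z hz
    set Y : Set ℝ := {y : ℝ | y ∈ Icc (0:ℝ) 1 ∧ circ a y ≤ z} with hYdef
    have h0Y : (0:ℝ) ∈ Y := by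
      refine ⟨⟨le_refl 0, zero_le_one⟩, ?_⟩
      refine hCle hz.1 ?_
      rintro v ⟨x, hx, y, hy, -, hy0, rfl⟩
      exact absurd hy0 (not_lt.mpr (hQicc y hy).1)
    have hYne : Y.Nonempty := ⟨0, h0Y⟩
    have hYbdd : BddAbove Y := ⟨1, fun y hy => hy.1.2⟩
    refine ⟨sSup Y, ⟨le_csSup hYbdd h0Y, csSup_le hYne (fun y hy => hy.1.2)⟩, ?_, ?_⟩
    · refine hCle hz.1 ?_
      rintro v ⟨x, hx, y, hy, hxa, hyY, rfl⟩
      obtain ⟨y₁, hy₁Y, hyy₁⟩ := exists_lt_of_lt_csSup hYne hyY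
      exact le_trans (hleC (hmemS hx hy hxa hyy₁)) hy₁Y.2
    · intro y' hy' hcy'
      exact le_csSup hYbdd ⟨hy', hcy'⟩
  · -- extension
    intro a _ b _ h
    rw [hcirc]
    exact h.symm
end

section
/- If an antitone involution ¬ on a densely ordered set Q extends, via ¬'(a) = inf{¬x : x ∈ Q, x < a}, to the MacNeille (order) completion of Q, then ¬' is again a strictly decreasing involution, provided Q is dense in its completion. -/
theorem macneille_extension_of_involution
    {Q C : Type*} [LinearOrder Q] [DenselyOrdered Q] [CompleteLinearOrder C]
    (neg : Q → Q) (hanti : StrictAnti neg) (hinv : ∀ x, neg (neg x) = x)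
    (e : Q → C) (he : StrictMono e)
    (hdense : ∀ c : C,
      IsLUB {y | ∃ x : Q, e x = y ∧ y ≤ c} c ∧
      IsGLB {y | ∃ x : Q, e x = y ∧ c ≤ y} c)
    (neg' : C → C)
    (hneg' : ∀ a : C, neg' a = sInf {y | ∃ x : Q, e x < a ∧ y = e (neg x)}) :
    StrictAnti neg' ∧ ∀ a : C, neg' (neg' a) = a := by
  -- density step up: below any a in C, we can move strictly up within Q
  have L1 : ∀ (q : Q) (a : C), e q < a → ∃ q', q < q' ∧ e q' < a := by
    intro q a h
    by_contra hc
    push_neg at hc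
    have hub : a ≤ e q := by
      apply (hdense a).1.2
      rintro y ⟨x, rfl, hx⟩
      by_contra hxy
      push_neg at hxy
      have hqx : q < x := he.lt_iff_lt.mp hxy
      obtain ⟨z, hz1, hz2⟩ := exists_between hqx
      exact absurd (lt_of_lt_of_le (he hz2) hx) (not_lt.mpr (hc z hz1))
    exact absurd hub (not_le.mpr h)
  -- density step down
  have L2 : ∀ (q : Q) (a : C), a < e q → ∃ q', q' < q ∧ a < e q' := by
    intro q a h
    by_contra hc
    push_neg at hc
    have hlb : e q ≤ a := by
      apply (hdense a).2.2
      rintro y ⟨x, rfl, hx⟩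
      by_contra hxy
      push_neg at hxy
      have hxq : x < q := he.lt_iff_lt.mp hxy
      obtain ⟨z, hz1, hz2⟩ := exists_between hxq
      exact absurd (lt_of_le_of_lt hx (he hz1)) (not_lt.mpr (hc z hz2))
    exact absurd hlb (not_le.mpr h)
  -- A : e q < a → neg' a < e (neg q)
  have A : ∀ (q : Q) (a : C), e q < a → neg' a < e (neg q) := by
    intro q a h
    obtain ⟨q', hq1, hq2⟩ := L1 q a h
    have h1 : neg' a ≤ e (neg q') := by
      rw [hneg' a]
      exact sInf_le ⟨q', hq2, rfl⟩
    exact lt_of_le_of_lt h1 (he (hanti hq1))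
  -- B : a < e q → e (neg q) < neg' a
  have B : ∀ (q : Q) (a : C), a < e q → e (neg q) < neg' a := by
    intro q a h
    obtain ⟨q', hq1, hq2⟩ := L2 q a h
    have h1 : e (neg q') ≤ neg' a := by
      rw [hneg' a]
      apply le_sInf
      rintro y ⟨z, hz, rfl⟩
      have hzq : z < q' := he.lt_iff_lt.mp (lt_trans hz hq2)
      exact (he (hanti hzq)).le
    exact lt_of_lt_of_le (he (hanti hq1)) h1
  -- value on image points
  have L0 : ∀ q : Q, neg' (e q) = e (neg q) := by
    intro q
    apply le_antisymm
    · by_contra hc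
      push_neg at hc
      -- e (neg q) < neg' (e q); find x with e (neg q) < e x ≤ neg' (e q)
      have : ∃ x : Q, e x ≤ neg' (e q) ∧ e (neg q) < e x := by
        by_contra h2
        push_neg at h2
        have : neg' (e q) ≤ e (neg q) := by
          apply (hdense (neg' (e q))).1.2
          rintro y ⟨x, rfl, hx⟩
          exact h2 x hx
        exact absurd this (not_le.mpr hc)
      obtain ⟨x, hx1, hx2⟩ := this
      have hnx : neg q < x := he.lt_iff_lt.mp hx2
      obtain ⟨z, hz1, hz2⟩ := exists_between hnx
      have hmem : e z ∈ {y | ∃ x : Q, e x < e q ∧ y = e (neg x)} := by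
        refine ⟨neg z, ?_, by rw [hinv]⟩
        have : neg z < neg (neg q) := hanti hz1
        rw [hinv] at this
        exact he this
      have : neg' (e q) ≤ e z := by rw [hneg' (e q)]; exact sInf_le hmem
      exact absurd (lt_of_lt_of_le (he hz2) hx1) (not_lt.mpr this)
    · rw [hneg' (e q)]
      apply le_sInf
      rintro y ⟨z, hz, rfl⟩
      exact (he (hanti (he.lt_iff_lt.mp hz))).le
  constructor
  · -- strict anti
    intro a b hab
    -- find q with a < e q < b
    have hq : ∃ q : Q, a < e q ∧ e q < b := by
      have : ∃ x : Q, e x ≤ b ∧ a < e x := by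
        by_contra h2
        push_neg at h2
        have : b ≤ a := by
          apply (hdense b).1.2
          rintro y ⟨x, rfl, hx⟩
          exact h2 x hx
        exact absurd this (not_le.mpr hab)
      obtain ⟨x, hx1, hx2⟩ := this
      obtain ⟨q', hq1, hq2⟩ := L2 x a hx2
      exact ⟨q', hq2, lt_of_lt_of_le (he hq1) hx1⟩
    obtain ⟨q, hq1, hq2⟩ := hq
    exact lt_trans (A q b hq2) (B q a hq1)
  · -- involution
    intro a
    apply le_antisymm
    · -- neg' (neg' a) ≤ a : show neg' (neg' a) is a lower bound of the GLB set at a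
      apply (hdense a).2.2
      rintro y ⟨x, rfl, hx⟩
      rcases lt_or_eq_of_le hx with hx | hx
      · have h1 : e (neg x) < neg' a := B x a hx
        have : neg' (neg' a) ≤ e (neg (neg x)) := by
          rw [hneg' (neg' a)]
          exact sInf_le ⟨neg x, h1, rfl⟩
        rwa [hinv] at this
      · rw [hx, L0, L0, hinv]
    · -- a ≤ neg' (neg' a)
      rw [hneg' (neg' a)]
      apply le_sInf
      rintro y ⟨z, hz, rfl⟩
      by_contra hc
      push_neg at hc
      have := A (neg z) a hc
      rw [hinv] at this
      exact absurd hz (not_lt.mpr this.le)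
end
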